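/- arXiv:2202.01083 — 3 statements merged into one kernel-verified Lean document; each statement's English description precedes it below -/
import Mathlib

section
/- For a general linear method with V = diag(1, −1), a perturbation of the form y₂^{[m−1]} ↦ y₂^{[m−1]} + (−1)^{m−1} z_{m−1} in the parasitic component propagates, to first order in the perturbation, according to z_m = (I − h J Σᵢ b_{2i} u_{i2}) z_{m−1}, where J = ∂f/∂y; hence the linearized parasitic dynamics is the Euler discretisation of z' = μ J z with parasitic growth parameter μ = −Σᵢ b_{2i} u_{i2}. -/
open Finset

theorem glm_output_perturbed_sub {R E ι : Type*} [CommRing R] [AddCommGroup E] [Module R E]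
    [Fintype ι] (J : E →ₗ[R] E) (h c : R) (u b : ι → R) (y : ι → E) (z : E) :
    h • ∑ i, b i • J (y i + (c * u i) • z) - h • ∑ i, b i • J (y i)
      = (c * (h * ∑ i, b i * u i)) • J z := by
  simp only [map_add, map_smul, smul_add, sum_add_distrib, add_sub_cancel_left, smul_smul,
    mul_sum, ← sum_smul]
  congr 1
  exact sum_congr rfl fun i _ => by ring

theorem stmt8_general {n : ℕ}
    (J : EuclideanSpace ℝ (Fin n) →L[ℝ] EuclideanSpace ℝ (Fin n)) (h : ℝ)
    (u b : Fin 2 → Fin 2 → ℝ)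
    (y1 y2 z : EuclideanSpace ℝ (Fin n)) (c : ℝ)
    (Y Y0 : Fin 2 → EuclideanSpace ℝ (Fin n))
    (hY : ∀ i, Y i = u i 0 • y1 + u i 1 • (y2 + c • z))
    (hY0 : ∀ i, Y0 i = u i 0 • y1 + u i 1 • y2)
    (μ : ℝ) (hμ : μ = -(∑ i, b 1 i * u i 1)) :
    h • (∑ i, b 1 i • J (Y i)) - (y2 + c • z)
      = (h • (∑ i, b 1 i • J (Y0 i)) - y2) + (-c) • (z + (h * μ) • J z) := by
  have hY_split : ∀ i, Y i = Y0 i + (c * u i 1) • z := fun i => by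
    rw [hY, hY0, smul_add, smul_smul, mul_comm, add_assoc]
  have houtput := glm_output_perturbed_sub J.toLinearMap h c (fun i => u i 1) (b 1) Y0 z
  simp only [ContinuousLinearMap.coe_coe, ← hY_split] at houtput
  subst hμ
  linear_combination (norm := module) houtput

/-- For a GLM with `V = diag(1, -1)` (explicit stages, `A = 0`, linear
vector field `f = J`), a perturbation `y₂^{[m-1]} ↦ y₂^{[m-1]} + (-1)^{m-1} z` of
the parasitic component propagates according to
`z_m = (I + hμJ) z_{m-1}` with parasitic growth parameter `μ = -∑ᵢ b_{2i} u_{i2}`: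
the perturbed second output equals the unperturbed one plus `(-1)^m (z + hμ J z)`. -/
theorem stmt8 {n : ℕ}
    (J : EuclideanSpace ℝ (Fin n) →L[ℝ] EuclideanSpace ℝ (Fin n)) (h : ℝ)
    (u b : Fin 2 → Fin 2 → ℝ)
    (y1 y2 z : EuclideanSpace ℝ (Fin n)) (c : ℝ) (hc : c = 1 ∨ c = -1)
    (Y Y0 : Fin 2 → EuclideanSpace ℝ (Fin n))
    (hY : ∀ i, Y i = u i 0 • y1 + u i 1 • (y2 + c • z))
    (hY0 : ∀ i, Y0 i = u i 0 • y1 + u i 1 • y2)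
    (μ : ℝ) (hμ : μ = -(∑ i, b 1 i * u i 1)) :
    h • (∑ i, b 1 i • J (Y i)) - (y2 + c • z)
      = (h • (∑ i, b 1 i • J (Y0 i)) - y2) + (-c) • (z + (h * μ) • J z) :=
  stmt8_general J h u b y1 y2 z c Y Y0 hY hY0 μ hμ
end

section
/- For the GLM tableau of the leapfrog variational integrator with A = (0), U = (0,1,2,0), B = (0,0,1,1)ᵀ, V = [[0,1,2,0],[1,0,0,0],[0,0,0,0],[0,0,1,0]], the parasitic growth parameter μ computed via μ = ξ^{−1} w* B U w, where ξ is an eigenvalue of V with ξ ≠ 1 and w the corresponding normalized left eigenvector, equals −5/3 (≈ −1.667) for the relevant parasitic eigenvalue. -/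
open Matrix

/-!
A left eigenvector of `V` for `ξ = -1` is forced to be a multiple `t • v` of
`v = (1, -1, -2, 0)`. Both `w ⬝ᵥ w` and `w ⬝ᵥ (BU) w` are quadratic in `w`, so under the
normalisation `w ⬝ᵥ w = 1` the quantity `w ⬝ᵥ (BU) w` equals the Rayleigh quotient
`v ⬝ᵥ (BU) v / v ⬝ᵥ v = 10 / 6`, and dividing by `ξ = -1` gives `-5/3`.
-/

theorem dotProduct_mulVec_eq_div_of_eq_smul {n K : Type*} [Fintype n] [Field K]
    (M : Matrix n n K) {v w : n → K} {t : K} (hwv : w = t • v) (hnorm : w ⬝ᵥ w = 1) :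
    w ⬝ᵥ M *ᵥ w = (v ⬝ᵥ M *ᵥ v) / (v ⬝ᵥ v) := by
  subst hwv
  have hquad : t • v ⬝ᵥ M *ᵥ (t • v) = t ^ 2 * (v ⬝ᵥ M *ᵥ v) := by
    rw [mulVec_smul, smul_dotProduct, dotProduct_smul, smul_eq_mul, smul_eq_mul, sq, mul_assoc]
  have hnorm' : t ^ 2 * (v ⬝ᵥ v) = 1 := by
    simpa only [dotProduct_smul, smul_dotProduct, smul_eq_mul, sq, mul_assoc] using hnorm
  rw [hquad, eq_div_iff (right_ne_zero_of_mul_eq_one hnorm'), mul_right_comm, hnorm', one_mul]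

def leapfrogV : Matrix (Fin 4) (Fin 4) ℝ := !![0, 1, 2, 0; 1, 0, 0, 0; 0, 0, 0, 0; 0, 0, 1, 0]

theorem eq_smul_of_vecMul_leapfrogV_eq_neg {w : Fin 4 → ℝ} (hw : vecMul w leapfrogV = -w) :
    w = w 0 • ![1, -1, -2, 0] := by
  have h0 := congrFun hw 0
  have h2 := congrFun hw 2
  have h3 := congrFun hw 3
  simp [leapfrogV, vecMul, dotProduct, Fin.sum_univ_four] at h0 h2 h3
  ext i
  fin_cases i <;> simp <;> linarith

/-- For the leapfrog GLM tableau with `U = (0,1,2,0)`,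
`B = (0,0,1,1)ᵀ`, `V = [[0,1,2,0],[1,0,0,0],[0,0,0,0],[0,0,1,0]]`, the parasitic
growth parameter `μ = ξ⁻¹ w* (BU) w` for the parasitic eigenvalue `ξ = -1` of `V`
(with `w` the corresponding normalized left eigenvector, `BU` given by
`BU = [[0,0,0,0],[0,0,0,0],[0,1,2,0],[0,1,2,0]]`) equals `-5/3`. -/
theorem stmt9 (w : Fin 4 → ℝ)
    (hw : Matrix.vecMul w (!![0, 1, 2, 0; 1, 0, 0, 0; 0, 0, 0, 0; 0, 0, 1, 0] :
            Matrix (Fin 4) (Fin 4) ℝ) = (-1 : ℝ) • w)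
    (hnorm : w ⬝ᵥ w = 1) :
    (-1 : ℝ)⁻¹ * (w ⬝ᵥ (!![0, 0, 0, 0; 0, 0, 0, 0; 0, 1, 2, 0; 0, 1, 2, 0] :
        Matrix (Fin 4) (Fin 4) ℝ).mulVec w) = -5 / 3 := by
  have hw' : vecMul w leapfrogV = -w := by rw [leapfrogV, hw, neg_one_smul]
  rw [dotProduct_mulVec_eq_div_of_eq_smul _ (eq_smul_of_vecMul_leapfrogV_eq_neg hw') hnorm]
  simp [dotProduct, mulVec, Fin.sum_univ_four]
  norm_num
end

section
/- Linear stability of the projected method versus the unprojected leapfrog for the harmonic oscillator: for the leapfrog method applied to the pendulum linearized at the stable equilibrium (q¹, q²) = (0, 0), i.e., to y' = (y², −y¹), a perturbation in the parasitic mode grows like the solutions of z' = μ J z with μ = −5/3 and J = [[0,1],[−1,0]]; since μJ has purely imaginary eigenvalues ±(5/3)i, the first-order parasitic modes do not grow exponentially but oscillate, and their amplitude after n Euler-type steps of size h is bounded by (1 + (5h/3)²)^{n/2} times the initial amplitude. -/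
open Polynomial

theorem Matrix.charpoly_smul_rotation {R : Type*} [CommRing R] [Nontrivial R] (μ : R) :
    (μ • !![0, 1; -1, 0] : Matrix (Fin 2) (Fin 2) R).charpoly = X ^ 2 + C (μ ^ 2) := by
  rw [Matrix.charpoly_fin_two, Matrix.trace_fin_two, Matrix.det_fin_two]
  simp [sq]

/-- `I + aJ` is `√(1 + a²)` times a rotation: `J` is skew-symmetric, so the cross terms cancel. -/
theorem EuclideanSpace.norm_add_mul_rotation (a : ℝ) (v : EuclideanSpace ℝ (Fin 2)) :
    ‖WithLp.toLp 2 (fun i : Fin 2 => if i = 0 then v 0 + a * v 1 else v 1 - a * v 0)‖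
      = √(1 + a ^ 2) * ‖v‖ := by
  rw [EuclideanSpace.norm_eq, EuclideanSpace.norm_eq, ← Real.sqrt_mul (by positivity)]
  congr 1
  simp only [Fin.sum_univ_two, Real.norm_eq_abs, sq_abs, if_true, one_ne_zero, if_false]
  ring

theorem stmt19_general (h : ℝ)
    (z : ℕ → EuclideanSpace ℝ (Fin 2))
    (hz : ∀ m, z (m + 1) = WithLp.toLp 2 (fun i =>
      if i = 0 then z m 0 + h * (-5 / 3) * z m 1
      else z m 1 - h * (-5 / 3) * z m 0)) :
    (((-5 / 3 : ℝ) • !![0, 1; -1, 0] : Matrix (Fin 2) (Fin 2) ℝ).charpoly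
        = Polynomial.X ^ 2 + Polynomial.C (25 / 9))
    ∧ ∀ n : ℕ, ‖z n‖ ≤ (Real.sqrt (1 + (5 * h / 3) ^ 2)) ^ n * ‖z 0‖ := by
  refine ⟨by rw [Matrix.charpoly_smul_rotation]; norm_num,
    fun n => le_geom (u := fun m => ‖z m‖) (Real.sqrt_nonneg _) n fun m _ => ?_⟩
  rw [hz m, EuclideanSpace.norm_add_mul_rotation]
  exact le_of_eq (by ring_nf)

/-- For the pendulum linearized at the stable equilibrium,
`J = [[0,1],[-1,0]]` and parasitic growth parameter `μ = -5/3`: the matrix `μJ`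
has characteristic polynomial `X² + 25/9` (purely imaginary eigenvalues
`±(5/3)i`), so the first-order parasitic modes oscillate rather than grow
exponentially; and the linearized parasitic iteration `z_m = (I + hμJ) z_{m-1}`
satisfies the amplitude bound `‖z_n‖ ≤ (1 + (5h/3)²)^{n/2} ‖z₀‖`. -/
theorem stmt19 (h : ℝ) (hh : 0 < h)
    (z : ℕ → EuclideanSpace ℝ (Fin 2))
    (hz : ∀ m, z (m + 1) = WithLp.toLp 2 (fun i =>
      if i = 0 then z m 0 + h * (-5 / 3) * z m 1
      else z m 1 - h * (-5 / 3) * z m 0)) :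
    (((-5 / 3 : ℝ) • !![0, 1; -1, 0] : Matrix (Fin 2) (Fin 2) ℝ).charpoly
        = Polynomial.X ^ 2 + Polynomial.C (25 / 9))
    ∧ ∀ n : ℕ, ‖z n‖ ≤ (Real.sqrt (1 + (5 * h / 3) ^ 2)) ^ n * ‖z 0‖ :=
  stmt19_general h z hz
end
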